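/- Let X be a topological space and P ∈ X; assume (X,P) is Fréchet–Urysohn at P, X is T1 at P, P is non-isolated, and D_P ≠ ∅. Then the inclusion-ordered family F of test sets at P has a minimal element: there exists a test set A such that every test set B with B ⊆ A equals A. -/

import Mathlib

open Filter Topology Set

/-- The family `S_P` of sequences in `X` converging to `P`. -/
def seqTo {X : Type*} [TopologicalSpace X] (P : X) : Set (ℕ → X) :=
  {T | Tendsto T atTop (𝓝 P)}

/-- The witness family `D(f)` of sequences converging to `P` along which
`f` fails to converge to `f P`. -/
def witnessSet {X : Type*} [TopologicalSpace X] (P : X) (f : X → ℝ) : Set (ℕ → X) :=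
  {T | Tendsto T atTop (𝓝 P) ∧ ¬ Tendsto (fun n => f (T n)) atTop (𝓝 (f P))}

/-- `A` is a test set at `P`: a subfamily of `S_P` meeting the witness family `D(f)`
of every function `f` discontinuous at `P`. -/
def IsTestSet {X : Type*} [TopologicalSpace X] (P : X) (A : Set (ℕ → X)) : Prop :=
  A ⊆ seqTo P ∧ ∀ f : X → ℝ, ¬ ContinuousAt f P → (A ∩ witnessSet P f).Nonempty

/-- The family `I_P`: countably infinite subsets of `X \ {P}` that are almost contained
in every open neighborhood of `P`. -/
def rangeFamily {X : Type*} [TopologicalSpace X] (P : X) : Set (Set X) :=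
  {M | M ⊆ {P}ᶜ ∧ M.Countable ∧ M.Infinite ∧
    ∀ U : Set X, IsOpen U → P ∈ U → (M \ U).Finite}

/-- `ℳ ⊆ I_P` is a maximal almost disjoint (MAD) family: distinct members have finite
intersection, and every member of `I_P` meets some member of `ℳ` in an infinite set. -/
def IsMadFamily {X : Type*} [TopologicalSpace X] (P : X) (ℳ : Set (Set X)) : Prop :=
  ℳ ⊆ rangeFamily P ∧
    (∀ A ∈ ℳ, ∀ B ∈ ℳ, A ≠ B → (A ∩ B).Finite) ∧
    (∀ S ∈ rangeFamily P, ∃ N ∈ ℳ, (S ∩ N).Infinite)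

/-!
Zorn's lemma gives a maximal almost disjoint family `ℳ ⊆ I_P`; enumerating each member of `ℳ`
injectively yields sequences converging to `P`, and these form a minimal test set.
If `f` is discontinuous at `P`, Fréchet–Urysohn gives a sequence converging to `P` along which `f`
stays outside a neighborhood of `f P`; by T1 its range lies in `I_P`, so it meets some `N ∈ ℳ` in
an infinite set, and the enumeration of `N` witnesses the discontinuity. Conversely the indicator
of `m ∈ ℳ` is discontinuous at `P`, and by almost disjointness only the enumeration of `m` can
witness this, so no enumeration can be dropped.
-/

theorem Set.exists_pairwise_finite_inter_maximal {α : Type*} (𝒮 : Set (Set α)) :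
    ∃ ℳ ⊆ 𝒮, ℳ.Pairwise (fun A B => (A ∩ B).Finite) ∧
      ∀ S ∈ 𝒮, S.Infinite → ∃ N ∈ ℳ, (S ∩ N).Infinite := by
  obtain ⟨ℳ, ⟨hℳ𝒮, hℳ⟩, hmax⟩ := zorn_subset
    {ℳ | ℳ ⊆ 𝒮 ∧ ℳ.Pairwise (fun A B => (A ∩ B).Finite)} fun c hc hchain =>
      ⟨⋃₀ c, ⟨sUnion_subset fun t ht => (hc ht).1,
        (pairwise_sUnion hchain.directedOn).2 fun t ht => (hc ht).2⟩,
        fun _ => subset_sUnion_of_mem⟩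
  refine ⟨ℳ, hℳ𝒮, hℳ, fun S hS hSinf => ?_⟩
  by_contra! hdisj
  have hSℳ : S ∉ ℳ := fun h => hSinf (by simpa using hdisj S h)
  refine hSℳ (hmax ⟨insert_subset hS hℳ𝒮, hℳ.insert fun N hN _ => ?_⟩ (subset_insert S ℳ)
    (mem_insert S ℳ))
  exact ⟨hdisj N hN, inter_comm S N ▸ hdisj N hN⟩

theorem Set.Countable.exists_injective_range_eq {α : Type*} {s : Set α} (hc : s.Countable)
    (hi : s.Infinite) : ∃ e : ℕ → α, Function.Injective e ∧ range e = s := by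
  have := hc.to_subtype
  have := hi.to_subtype
  obtain ⟨e⟩ : Nonempty (ℕ ≃ s) := nonempty_equiv_of_countable
  exact ⟨Subtype.val ∘ e, Subtype.val_injective.comp e.injective,
    by rw [range_comp, e.range_eq_univ, image_univ, Subtype.range_coe]⟩

theorem frequently_mem_of_infinite_inter_range {α : Type*} {e : ℕ → α} {S : Set α}
    (h : (S ∩ range e).Infinite) : ∃ᶠ n in atTop, e n ∈ S := by
  rw [← image_preimage_eq_inter_range] at h
  exact Nat.frequently_atTop_iff_infinite.2 (h.of_image e)

section

variable {X : Type*} [TopologicalSpace X] {P : X}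

theorem exists_isMadFamily (P : X) : ∃ ℳ, IsMadFamily P ℳ := by
  obtain ⟨ℳ, hℳ, hdisj, hmax⟩ := exists_pairwise_finite_inter_maximal (rangeFamily P)
  exact ⟨ℳ, hℳ, fun A hA B hB => hdisj hA hB, fun S hS => hmax S hS hS.2.2.1⟩

theorem compl_mem_nhds_of_finite
    (hT1 : ∀ x : X, x ≠ P → ∃ U : Set X, IsOpen U ∧ P ∈ U ∧ x ∉ U)
    {F : Set X} (hF : F.Finite) (hPF : P ∉ F) : Fᶜ ∈ 𝓝 P := by
  have hsingleton : ∀ x ∈ F, ({x}ᶜ : Set X) ∈ 𝓝 P := fun x hx => by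
    obtain ⟨U, hU, hPU, hxU⟩ := hT1 x (ne_of_mem_of_not_mem hx hPF)
    exact mem_of_superset (hU.mem_nhds hPU) fun y hyU hyx => hxU (hyx ▸ hyU)
  refine mem_of_superset ((biInter_mem hF).2 hsingleton) fun y hy hyF => ?_
  exact mem_iInter₂.1 hy y hyF rfl

theorem range_mem_rangeFamily
    (hT1 : ∀ x : X, x ≠ P → ∃ U : Set X, IsOpen U ∧ P ∈ U ∧ x ∉ U)
    {a : ℕ → X} (ha : Tendsto a atTop (𝓝 P)) (haP : ∀ n, a n ≠ P) :
    range a ∈ rangeFamily P := by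
  refine ⟨range_subset_iff.2 haP, countable_range a, fun hfin => ?_, fun U hU hPU => ?_⟩
  · obtain ⟨n, hn⟩ :=
      (ha.eventually_mem (compl_mem_nhds_of_finite hT1 hfin fun ⟨n, hn⟩ => haP n hn)).exists
    exact hn (mem_range_self n)
  · have hfin : (a ⁻¹' U)ᶜ.Finite := by
      simpa [← Nat.cofinite_eq_atTop] using ha (hU.mem_nhds hPU)
    refine (hfin.image a).subset ?_
    rintro _ ⟨⟨n, rfl⟩, hnU⟩
    exact mem_image_of_mem a hnU

theorem tendsto_of_injective_of_range_mem_rangeFamily {e : ℕ → X}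
    (hinj : Function.Injective e) (he : range e ∈ rangeFamily P) :
    Tendsto e atTop (𝓝 P) := by
  rw [(nhds_basis_opens P).tendsto_right_iff]
  rintro U ⟨hPU, hU⟩
  have hfin : (e ⁻¹' (range e \ U)).Finite := (he.2.2.2 U hU hPU).preimage hinj.injOn
  simpa [← Nat.cofinite_eq_atTop] using hfin.eventually_cofinite_notMem

theorem exists_seq_tendsto_forall_notMem_of_not_continuousAt
    (hFU : ∀ A : Set X, P ∈ closure A →
      ∃ a : ℕ → X, (∀ n, a n ∈ A) ∧ Tendsto a atTop (𝓝 P))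
    {f : X → ℝ} (hf : ¬ ContinuousAt f P) :
    ∃ s ∈ 𝓝 (f P), ∃ a : ℕ → X, Tendsto a atTop (𝓝 P) ∧ ∀ n, f (a n) ∉ s := by
  obtain ⟨s, hs, hns⟩ : ∃ s ∈ 𝓝 (f P), f ⁻¹' s ∉ 𝓝 P := by
    simpa [ContinuousAt, tendsto_def] using hf
  obtain ⟨a, ha, haP⟩ := hFU (f ⁻¹' s)ᶜ (by rwa [closure_compl, mem_compl_iff, mem_interior_iff_mem_nhds])
  exact ⟨s, hs, a, haP, ha⟩

end

theorem not_continuousAt_indicator_one {X : Type*} [TopologicalSpace X] {P : X} {s : Set X}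
    {a : ℕ → X} (ha : Tendsto a atTop (𝓝 P)) (has : ∀ n, a n ∈ s) (hPs : P ∉ s) :
    ¬ ContinuousAt (s.indicator (1 : X → ℝ)) P := fun hc => by
  have hlim := hc.tendsto.comp ha
  simp only [Function.comp_def, indicator_of_mem (has _), indicator_of_notMem hPs] at hlim
  exact one_ne_zero (tendsto_nhds_unique tendsto_const_nhds hlim)

namespace IsMadFamily

variable {X : Type*} [TopologicalSpace X] {P : X} {ℳ : Set (Set X)} {e : ℳ → ℕ → X}

theorem tendsto_enum (hℳ : IsMadFamily P ℳ) (he_inj : ∀ m, Function.Injective (e m))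
    (he_range : ∀ m, range (e m) = m) (m : ℳ) : Tendsto (e m) atTop (𝓝 P) :=
  tendsto_of_injective_of_range_mem_rangeFamily (he_inj m) (he_range m ▸ hℳ.1 m.2)

theorem isTestSet_range
    (hFU : ∀ A : Set X, P ∈ closure A →
      ∃ a : ℕ → X, (∀ n, a n ∈ A) ∧ Tendsto a atTop (𝓝 P))
    (hT1 : ∀ x : X, x ≠ P → ∃ U : Set X, IsOpen U ∧ P ∈ U ∧ x ∉ U)
    (hℳ : IsMadFamily P ℳ) (he_inj : ∀ m, Function.Injective (e m))
    (he_range : ∀ m, range (e m) = m) : IsTestSet P (range e) := by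
  refine ⟨range_subset_iff.2 (hℳ.tendsto_enum he_inj he_range), fun f hf => ?_⟩
  obtain ⟨s, hs, a, ha, has⟩ := exists_seq_tendsto_forall_notMem_of_not_continuousAt hFU hf
  obtain ⟨N, hN, hinf⟩ := hℳ.2.2 (range a)
    (range_mem_rangeFamily hT1 ha fun n haP => has n (haP ▸ mem_of_mem_nhds hs))
  refine ⟨e ⟨N, hN⟩, mem_range_self _, hℳ.tendsto_enum he_inj he_range _, fun hconv => ?_⟩
  have hfreq : ∃ᶠ n in atTop, e ⟨N, hN⟩ n ∈ range a :=
    frequently_mem_of_infinite_inter_range (by rwa [he_range])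
  obtain ⟨n, hn, k, hk⟩ := ((hconv.eventually_mem hs).and_frequently hfreq).exists
  exact has k (hk ▸ hn)

theorem eq_of_mem_witnessSet_indicator (hℳ : IsMadFamily P ℳ)
    (he_inj : ∀ m, Function.Injective (e m)) (he_range : ∀ m, range (e m) = m) {m m' : ℳ}
    (h : e m' ∈ witnessSet P ((m : Set X).indicator 1)) : m' = m := by
  by_contra hne
  have hfin : ((m' : Set X) ∩ m).Finite :=
    hℳ.2.1 _ m'.2 _ m.2 fun h => hne (Subtype.ext h)
  have hout : ∀ᶠ n in atTop, e m' n ∉ (m : Set X) := by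
    rw [← Nat.cofinite_eq_atTop]
    filter_upwards [(hfin.preimage (he_inj m').injOn).eventually_cofinite_notMem] with n hn hnm
    exact hn ⟨he_range m' ▸ mem_range_self n, hnm⟩
  refine h.2 ?_
  rw [indicator_of_notMem fun hPm => (hℳ.1 m.2).1 hPm rfl]
  exact tendsto_const_nhds.congr' (hout.mono fun n hn => (indicator_of_notMem hn _).symm)

theorem eq_range_of_isTestSet_subset (hℳ : IsMadFamily P ℳ)
    (he_inj : ∀ m, Function.Injective (e m)) (he_range : ∀ m, range (e m) = m)
    {B : Set (ℕ → X)} (hB : IsTestSet P B) (hBA : B ⊆ range e) : B = range e := by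
  refine hBA.antisymm ?_
  rintro _ ⟨m, rfl⟩
  obtain ⟨T, hTB, hT⟩ := hB.2 _ (not_continuousAt_indicator_one
    (hℳ.tendsto_enum he_inj he_range m) (fun n => he_range m ▸ mem_range_self n)
    fun hPm => (hℳ.1 m.2).1 hPm rfl)
  obtain ⟨m', rfl⟩ := hBA hTB
  rwa [hℳ.eq_of_mem_witnessSet_indicator he_inj he_range hT] at hTB

end IsMadFamily

theorem exists_minimal_testSet_general {X : Type*} [TopologicalSpace X] (P : X)
    (hFU : ∀ A : Set X, P ∈ closure A →
      ∃ a : ℕ → X, (∀ n, a n ∈ A) ∧ Tendsto a atTop (𝓝 P))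
    (hT1 : ∀ x : X, x ≠ P → ∃ U : Set X, IsOpen U ∧ P ∈ U ∧ x ∉ U) :
    ∃ A : Set (ℕ → X), IsTestSet P A ∧
      ∀ B : Set (ℕ → X), IsTestSet P B → B ⊆ A → B = A := by
  obtain ⟨ℳ, hℳ⟩ := exists_isMadFamily P
  choose e he_inj he_range using fun m : ℳ =>
    (hℳ.1 m.2).2.1.exists_injective_range_eq (hℳ.1 m.2).2.2.1
  exact ⟨range e, hℳ.isTestSet_range hFU hT1 he_inj he_range,
    fun B hB hBA => hℳ.eq_range_of_isTestSet_subset he_inj he_range hB hBA⟩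

/-- Existence of a minimal test set under the standing framework. -/
theorem exists_minimal_testSet {X : Type*} [TopologicalSpace X] (P : X)
    (hFU : ∀ A : Set X, P ∈ closure A →
      ∃ a : ℕ → X, (∀ n, a n ∈ A) ∧ Tendsto a atTop (𝓝 P))
    (hT1 : ∀ x : X, x ≠ P → ∃ U : Set X, IsOpen U ∧ P ∈ U ∧ x ∉ U)
    (hni : ∀ U ∈ 𝓝 P, ∃ x ∈ U, x ≠ P)
    (hD : ∃ f : X → ℝ, ¬ ContinuousAt f P) :
    ∃ A : Set (ℕ → X), IsTestSet P A ∧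
      ∀ B : Set (ℕ → X), IsTestSet P B → B ⊆ A → B = A :=
  exists_minimal_testSet_general P hFU hT1
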